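/- Over F = 𝔽₂: if Q = 𝔭_q(g,f) is an irreducible candidate with f(0) = 0 and Q is primitive (a root of Q generates the multiplicative group of its splitting field), then q is primitive (a root of q generates the multiplicative group of its splitting field). -/

import Mathlib

/-!
Put `β = f(μ)/g(μ)`. Since `Q(μ) = g(μ)^m q(β)`, `β` is a root of `q` and so lies in the copy of
`L` inside `K`. As `μ` generates `K` over `𝔽₂`, it has degree `n = [K : L]` over `L`, so its
minimal polynomial over `L` is `f - β g`; reading off the constant term (in characteristic 2)
gives `β = N_{K/L}(μ)`. The norm of a generator of `Kˣ` generates `Lˣ`, and `α`, a conjugate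
of `β`, has the same order.
-/

open Polynomial

/-- The homogenization `𝔭_q(g,f) = ∑ q_i f^i g^(m-i)` where `m = deg q`. -/
noncomputable def homog {F : Type*} [Field F] (q g f : Polynomial F) : Polynomial F :=
  ∑ i ∈ Finset.range (q.natDegree + 1), C (q.coeff i) * f ^ i * g ^ (q.natDegree - i)

open IntermediateField Module

section FiniteField

variable {F E : Type*} [Field F] [Field E] [Algebra F E]

theorem adjoin_simple_eq_top_of_orderOf_eq [Fintype E] {μ : E}
    (hμ : orderOf μ = Fintype.card E - 1) : F⟮μ⟯ = ⊤ := by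
  have hμ0 : μ ≠ 0 := by
    rintro rfl
    rw [orderOf_eq_zero_iff'.mpr fun n hn => by simp [zero_pow hn.ne']] at hμ
    have := Fintype.one_lt_card (α := E)
    omega
  have hgen : Subgroup.zpowers (Units.mk0 μ hμ0) = ⊤ := by
    refine Subgroup.eq_top_of_card_eq _ ?_
    rw [Nat.card_zpowers, Nat.card_units, ← orderOf_units, Units.val_mk0, hμ,
      Nat.card_eq_fintype_card]
  refine eq_top_iff.mpr fun x _ => ?_
  obtain rfl | hx := eq_or_ne x 0
  · exact zero_mem _
  obtain ⟨k, hk⟩ := Subgroup.mem_zpowers_iff.mp (hgen ▸ Subgroup.mem_top (Units.mk0 x hx))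
  rw [← Units.val_mk0 hx, ← hk, Units.val_zpow_eq_zpow_val, Units.val_mk0]
  exact zpow_mem (mem_adjoin_simple_self F μ) k

theorem orderOf_norm_of_orderOf_eq [Fintype F] [Fintype E] {μ : E}
    (hμ : orderOf μ = Fintype.card E - 1) : orderOf (Algebra.norm F μ) = Fintype.card F - 1 := by
  have hdvd : Fintype.card F - 1 ∣ Fintype.card E - 1 := by
    rw [Module.card_eq_pow_finrank (K := F) (V := E)]
    exact Nat.sub_one_dvd_pow_sub_one _ _
  have hE : Fintype.card E - 1 ≠ 0 := by have := Fintype.one_lt_card (α := E); omega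
  have hF : Fintype.card F - 1 ≠ 0 := by have := Fintype.one_lt_card (α := F); omega
  rw [← orderOf_injective (algebraMap F E).toMonoidHom (algebraMap F E).injective]
  change orderOf (algebraMap F E _) = _
  rw [FiniteField.algebraMap_norm_eq_pow, Nat.card_eq_fintype_card,
    Nat.card_eq_fintype_card, orderOf_pow_of_dvd (Nat.div_ne_zero_iff_of_dvd hdvd |>.mpr ⟨hE, hF⟩)
      (by rw [hμ]; exact Nat.div_dvd_of_dvd hdvd), hμ, Nat.div_div_self hdvd hE]

theorem adjoin_simple_eq_top_of_isSplittingField [Finite E] {r : F[X]} [IsSplittingField F E r]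
    (hr : Irreducible r) {x : E} (hx : aeval x r = 0) : F⟮x⟯ = ⊤ := by
  have hint : IsIntegral F x := IsAlgebraic.isIntegral ⟨r, hr.ne_zero, hx⟩
  -- `F⟮x⟯` is normal over `F`, as is every extension of finite fields.
  have hsplit : (r.map (algebraMap F F⟮x⟯)).Splits := by
    refine (Normal.splits (inferInstance : Normal F F⟮x⟯) (AdjoinSimple.gen F x)).of_dvd
      (map_ne_zero (minpoly.ne_zero (isIntegral_iff.mpr hint))) ?_
    rw [minpoly_gen, ← minpoly.eq_of_irreducible hr hx, Polynomial.map_mul]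
    exact dvd_mul_right _ _
  rw [← toSubalgebra_injective.eq_iff, top_toSubalgebra, eq_top_iff,
    ← IsSplittingField.adjoin_rootSet E r, Algebra.adjoin_le_iff]
  intro y hy
  have hy' : ((r.map (algebraMap F F⟮x⟯)).map (algebraMap F⟮x⟯ E)).IsRoot y := by
    rw [Polynomial.map_map, ← IsScalarTower.algebraMap_eq, IsRoot, eval_map_algebraMap]
    exact aeval_eq_zero_of_mem_rootSet hy
  obtain ⟨z, rfl⟩ := hsplit.mem_range_of_isRoot (map_ne_zero hr.ne_zero) hy'
  exact z.2

theorem finrank_eq_natDegree_of_adjoin_simple_eq_top {r : F[X]} (hr : Irreducible r) {x : E}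
    (hx : aeval x r = 0) (htop : F⟮x⟯ = ⊤) : Module.finrank F E = r.natDegree := by
  have hint : IsIntegral F x := IsAlgebraic.isIntegral ⟨r, hr.ne_zero, hx⟩
  rw [← finrank_top', ← htop, adjoin.finrank hint, ← minpoly.eq_of_irreducible hr hx,
    natDegree_mul_C (inv_ne_zero (leadingCoeff_ne_zero.mpr hr.ne_zero))]

end FiniteField

section Homog

variable {F E : Type*} [Field F] [Field E] [Algebra F E] {q g f : F[X]}

theorem homog_eq_sum_add (q g f : F[X]) : homog q g f =
    ∑ i ∈ Finset.range q.natDegree, C (q.coeff i) * f ^ i * g ^ (q.natDegree - i) +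
      C q.leadingCoeff * f ^ q.natDegree := by
  rw [homog, Finset.sum_range_succ, Nat.sub_self, pow_zero, mul_one, leadingCoeff]

theorem natDegree_homog (hq : q ≠ 0) (hdeg : g.natDegree < f.natDegree) :
    (homog q g f).natDegree = q.natDegree * f.natDegree := by
  have hf : f ≠ 0 := by rintro rfl; simp at hdeg
  have hlead : (C q.leadingCoeff * f ^ q.natDegree).natDegree = q.natDegree * f.natDegree := by
    rw [natDegree_C_mul (leadingCoeff_ne_zero.mpr hq), natDegree_pow]
  rw [homog_eq_sum_add, natDegree_add_eq_right_of_degree_lt, hlead]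
  rw [degree_eq_natDegree (p := C q.leadingCoeff * f ^ q.natDegree) (by simp [hq, hf]), hlead]
  refine (degree_sum_le _ _).trans_lt ((Finset.sup_lt_iff (WithBot.bot_lt_coe _)).mpr ?_)
  intro i hi
  refine degree_le_natDegree.trans_lt (Nat.cast_lt.mpr ?_)
  have hi := Finset.mem_range.mp hi
  calc (C (q.coeff i) * f ^ i * g ^ (q.natDegree - i)).natDegree
      ≤ i * f.natDegree + (q.natDegree - i) * g.natDegree := by
        refine natDegree_mul_le.trans (add_le_add (natDegree_C_mul_le _ _ |>.trans ?_) ?_)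
        · exact natDegree_pow_le
        · exact natDegree_pow_le
    _ < i * f.natDegree + (q.natDegree - i) * f.natDegree := by
        gcongr
        omega
    _ = q.natDegree * f.natDegree := by rw [← add_mul, Nat.add_sub_cancel' hi.le]

theorem aeval_homog (x : E) : aeval x (homog q g f) = ∑ i ∈ Finset.range (q.natDegree + 1),
    algebraMap F E (q.coeff i) * aeval x f ^ i * aeval x g ^ (q.natDegree - i) := by
  simp [homog, map_sum]

theorem aeval_homog_of_ne_zero {x : E} (hg : aeval x g ≠ 0) :
    aeval x (homog q g f) = aeval x g ^ q.natDegree * aeval (aeval x f / aeval x g) q := by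
  rw [aeval_homog, aeval_eq_sum_range (p := q), Finset.mul_sum]
  refine Finset.sum_congr rfl fun i hi => ?_
  rw [Algebra.smul_def, div_pow, ← pow_sub_mul_pow _ (Nat.lt_succ_iff.mp (Finset.mem_range.mp hi))]
  field_simp

theorem aeval_ne_zero_of_aeval_homog_eq_zero (hq : q ≠ 0) (hfg : IsCoprime f g) {x : E}
    (hx : aeval x (homog q g f) = 0) : aeval x g ≠ 0 := by
  intro hg
  have hlow : ∀ i ∈ Finset.range q.natDegree,
      algebraMap F E (q.coeff i) * aeval x f ^ i * aeval x g ^ (q.natDegree - i) = 0 :=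
    fun i hi => by rw [hg, zero_pow (Nat.sub_ne_zero_of_lt (Finset.mem_range.mp hi)), mul_zero]
  rw [aeval_homog, Finset.sum_range_succ, Finset.sum_eq_zero hlow, zero_add, Nat.sub_self,
    pow_zero, mul_one] at hx
  have hlead : algebraMap F E q.leadingCoeff ≠ 0 :=
    (_root_.map_ne_zero _).mpr (leadingCoeff_ne_zero.mpr hq)
  have hf : aeval x f = 0 := eq_zero_of_pow_eq_zero ((mul_eq_zero.mp hx).resolve_left hlead)
  obtain ⟨a, b, hab⟩ := hfg
  simpa [hf, hg] using congrArg (aeval x) hab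

end Homog

theorem orderOf_eq_of_minpoly_eq {F A B : Type*} [Field F] [Ring A] [Ring B] [Algebra F A]
    [Algebra F B] {x : A} {y : B} (h : minpoly F x = minpoly F y) : orderOf x = orderOf y := by
  refine orderOf_eq_orderOf_iff.mpr fun k => ?_
  have hx := minpoly.dvd_iff (A := F) (x := x) (p := X ^ k - 1)
  have hy := minpoly.dvd_iff (A := F) (x := y) (p := X ^ k - 1)
  simp only [map_sub, map_pow, aeval_X, map_one, sub_eq_zero] at hx hy
  rw [← hx, ← hy, h]

theorem norm_eq_coeff_zero_of_aeval_sub_C_mul_eq_zero {L K : Type*} [Field L] [Field K]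
    [Algebra L K] {f g : L[X]} (hf : f.Monic) (hdeg : g.natDegree < f.natDegree) {b : L} {μ : K}
    (hμ : aeval μ (f - C b * g) = 0) (hrank : finrank L K = f.natDegree) (htop : L⟮μ⟯ = ⊤) :
    Algebra.norm L μ = (-1) ^ f.natDegree * (f.coeff 0 - b * g.coeff 0) := by
  have hlt : (C b * g).natDegree < f.natDegree := (natDegree_C_mul_le _ _).trans_lt hdeg
  have hp : (f - C b * g).Monic := hf.sub_of_left (degree_lt_degree hlt)
  have hint : IsIntegral L μ := ⟨_, hp, hμ⟩
  have hmin : minpoly L μ = f - C b * g := by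
    refine (eq_of_monic_of_dvd_of_natDegree_le (minpoly.monic hint) hp (minpoly.dvd L μ hμ) ?_).symm
    rw [natDegree_sub_eq_left_of_natDegree_lt hlt, ← hrank, ← finrank_top', ← htop,
      adjoin.finrank hint]
  have := Algebra.PowerBasis.norm_gen_eq_coeff_zero_minpoly (PowerBasis.ofAdjoinEqTop' hint
    ((adjoin_simple_eq_top_iff_of_isAlgebraic hint.isAlgebraic).mp htop))
  rwa [PowerBasis.ofAdjoinEqTop'_gen, PowerBasis.ofAdjoinEqTop'_dim, hmin,
    natDegree_sub_eq_left_of_natDegree_lt hlt, coeff_sub, coeff_C_mul] at this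

theorem ZMod.eq_one_of_ne_zero_mod_two {x : ZMod 2} (hx : x ≠ 0) : x = 1 := by
  revert x
  decide

theorem eval_zero_eq_one_of_isCoprime {f g : (ZMod 2)[X]} (hfg : IsCoprime f g)
    (hf0 : f.eval 0 = 0) : g.eval 0 = 1 := by
  obtain ⟨a, b, hab⟩ := hfg
  have h := congrArg (eval 0) hab
  rw [eval_add, eval_mul, eval_mul, hf0, mul_zero, zero_add, eval_one] at h
  exact ZMod.eq_one_of_ne_zero_mod_two (right_ne_zero_of_mul_eq_one h)

theorem norm_eq_of_algebraMap_mul_eq {L K : Type*} [Field L] [Field K] [Algebra (ZMod 2) L]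
    [Algebra (ZMod 2) K] [Algebra L K] [IsScalarTower (ZMod 2) L K] {f g : (ZMod 2)[X]}
    (hfg : IsCoprime f g) (hdeg : g.natDegree < f.natDegree) (hf0 : f.eval 0 = 0) {μ : K} {b : L}
    (hb : algebraMap L K b * aeval μ g = aeval μ f) (hrank : finrank L K = f.natDegree)
    (htop : L⟮μ⟯ = ⊤) : Algebra.norm L μ = b := by
  have : CharP L 2 := (Algebra.charP_iff (ZMod 2) L 2).mp inferInstance
  have hfne : f ≠ 0 := by rintro rfl; simp at hdeg
  have hf : (f.map (algebraMap (ZMod 2) L)).Monic :=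
    Monic.map _ (ZMod.eq_one_of_ne_zero_mod_two (leadingCoeff_ne_zero.mpr hfne))
  have hμ : aeval μ (f.map (algebraMap (ZMod 2) L) - C b * g.map (algebraMap (ZMod 2) L)) = 0 := by
    rw [map_sub, map_mul, aeval_C, aeval_map_algebraMap, aeval_map_algebraMap, hb, sub_self]
  rw [norm_eq_coeff_zero_of_aeval_sub_C_mul_eq_zero hf (by rwa [natDegree_map, natDegree_map]) hμ
    (by rwa [natDegree_map]) htop]
  rw [coeff_map, coeff_map, coeff_zero_eq_eval_zero, coeff_zero_eq_eval_zero, hf0,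
    eval_zero_eq_one_of_isCoprime hfg hf0, map_zero, map_one, mul_one, zero_sub]
  simp only [CharTwo.neg_eq, one_pow, one_mul]

theorem primitive_of_primitive_candidate_general {L K : Type*} [Field L] [Fintype L] [Field K]
    [Fintype K] [Algebra (ZMod 2) L] [Algebra (ZMod 2) K] [Algebra L K]
    [IsScalarTower (ZMod 2) L K]
    (q f g : Polynomial (ZMod 2))
    (hq : Irreducible q)
    (hfg : IsCoprime f g) (hdeg : g.natDegree < f.natDegree) (hf0 : f.eval 0 = 0)
    (hQ : Irreducible (homog q g f))
    (hL : Polynomial.IsSplittingField (ZMod 2) L q)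
    (μ : K) (hμ : Polynomial.aeval μ (homog q g f) = 0)
    (hprim : orderOf μ = Fintype.card K - 1)
    (α : L) (hα : Polynomial.aeval α q = 0) :
    orderOf α = Fintype.card L - 1 := by
  have hrankK : finrank (ZMod 2) K = q.natDegree * f.natDegree :=
    (finrank_eq_natDegree_of_adjoin_simple_eq_top hQ hμ
      (adjoin_simple_eq_top_of_orderOf_eq hprim)).trans (natDegree_homog hq.ne_zero hdeg)
  have hrankL : finrank (ZMod 2) L = q.natDegree := finrank_eq_natDegree_of_adjoin_simple_eq_top
    hq hα (adjoin_simple_eq_top_of_isSplittingField hq hα)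
  have hrank : finrank L K = f.natDegree := by
    refine Nat.eq_of_mul_eq_mul_left hq.natDegree_pos ?_
    rw [← hrankL, finrank_mul_finrank, hrankK, hrankL]
  have hg := aeval_ne_zero_of_aeval_homog_eq_zero hq.ne_zero hfg hμ
  have hβ : aeval (aeval μ f / aeval μ g) q = 0 := by
    rwa [aeval_homog_of_ne_zero hg, mul_eq_zero, or_iff_right (pow_ne_zero _ hg)] at hμ
  obtain ⟨b, hb⟩ := (IsSplittingField.splits L q).mem_range_of_isRoot (map_ne_zero hq.ne_zero)
    (i := algebraMap L K) (by
      rwa [IsRoot, Polynomial.map_map, ← IsScalarTower.algebraMap_eq, eval_map_algebraMap])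
  have hnorm : Algebra.norm L μ = b := norm_eq_of_algebraMap_mul_eq hfg hdeg hf0
    (by rw [hb, div_mul_cancel₀ _ hg]) hrank (adjoin_simple_eq_top_of_orderOf_eq hprim)
  have hbq : aeval b q = 0 := by
    rwa [← hb, aeval_algebraMap_apply, map_eq_zero] at hβ
  calc orderOf α = orderOf b := orderOf_eq_of_minpoly_eq
        (by rw [← minpoly.eq_of_irreducible hq hα, ← minpoly.eq_of_irreducible hq hbq])
    _ = Fintype.card L - 1 := hnorm ▸ orderOf_norm_of_orderOf_eq hprim

theorem primitive_of_primitive_candidate {L K : Type*} [Field L] [Fintype L] [Field K]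
    [Fintype K] [Algebra (ZMod 2) L] [Algebra (ZMod 2) K] [Algebra L K]
    [IsScalarTower (ZMod 2) L K]
    (q f g : Polynomial (ZMod 2))
    (hqm : q.Monic) (hq : Irreducible q) (hdq : 1 ≤ q.natDegree)
    (hfg : IsCoprime f g) (hdeg : g.natDegree < f.natDegree) (hf0 : f.eval 0 = 0)
    (hQ : Irreducible (homog q g f))
    (hK : Polynomial.IsSplittingField (ZMod 2) K (homog q g f))
    (hL : Polynomial.IsSplittingField (ZMod 2) L q)
    (μ : K) (hμ : Polynomial.aeval μ (homog q g f) = 0)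
    (hprim : orderOf μ = Fintype.card K - 1)
    (α : L) (hα : Polynomial.aeval α q = 0) :
    orderOf α = Fintype.card L - 1 :=
  primitive_of_primitive_candidate_general q f g hq hfg hdeg hf0 hQ hL μ hμ hprim α hα
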